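/- arXiv:2204.03278 — 4 statements merged into one kernel-verified Lean document; each statement's English description precedes it below -/
import Mathlib

section
/- Every element of the monoid of 2×2 integer matrices (up to positive scalar) generated by A = [[1,0],[1,1]], B = [[0,1],[-1,2]], C = [[2,0],[1,1]], and c = [[1,0],[-1,2]] whose associated linear fractional transformation maps [0,1) bijectively onto [0,1) is equal (up to positive scalar) to C^k for some integer k. -/
def MA : Matrix (Fin 2) (Fin 2) ℤ := !![1, 0; 1, 1]
def MB : Matrix (Fin 2) (Fin 2) ℤ := !![0, 1; -1, 2]
def MC : Matrix (Fin 2) (Fin 2) ℤ := !![2, 0; 1, 1]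
def Mc : Matrix (Fin 2) (Fin 2) ℤ := !![1, 0; -1, 2]

/-- The linear fractional transformation of ℝ associated to an integer matrix. -/
noncomputable def lft (M : Matrix (Fin 2) (Fin 2) ℤ) (x : ℝ) : ℝ :=
  ((M 0 0 : ℝ) * x + (M 0 1 : ℝ)) / ((M 1 0 : ℝ) * x + (M 1 1 : ℝ))


/-!
A generator `M` has positive determinant and a denominator that is positive on `[0,1]`, so
`lft M` is increasing there and maps `[0,1)` injectively into `[lft M 0, lft M 1)`: for `A`
this is `[0,1/2)` and for `B` it is `[1/2,1)`, while `C` and `c` are bijections of `[0,1)`.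
Injective self-maps of `[0,1)` are closed under composition, and if `f ∘ g` is onto then so are
`f` and `g`; hence a bijective product contains only the factors `C` and `c`. These commute with
`C c = 2`, so the product is a positive multiple of `C ^ k` or `c ^ k`.
-/

open Set

theorem Set.SurjOn.of_comp_of_injOn {α β : Type*} {f : α → β} {g : β → β} {s : Set α}
    {t : Set β} (h : SurjOn (g ∘ f) s t) (hf : MapsTo f s t) (hgt : MapsTo g t t)
    (hg : InjOn g t) : SurjOn f s t := by
  intro y hy
  obtain ⟨x, hx, hxy⟩ := h (hgt hy)
  exact ⟨x, hx, hg (hf hx) hy hxy⟩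

namespace IntervalLFT

abbrev Mat := Matrix (Fin 2) (Fin 2) ℤ

noncomputable def lftNum (M : Mat) (x : ℝ) : ℝ := (M 0 0 : ℝ) * x + M 0 1

noncomputable def lftDen (M : Mat) (x : ℝ) : ℝ := (M 1 0 : ℝ) * x + M 1 1

lemma lft_eq_div (M : Mat) (x : ℝ) : lft M x = lftNum M x / lftDen M x := rfl

lemma lftDen_mul_lft (M : Mat) {x : ℝ} (hx : lftDen M x ≠ 0) :
    lftDen M x * lft M x = lftNum M x :=
  mul_div_cancel₀ _ hx

lemma lftNum_mul (M N : Mat) {x : ℝ} (hN : lftDen N x ≠ 0) :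
    lftNum (M * N) x = lftDen N x * lftNum M (lft N x) := by
  have h := lftDen_mul_lft N hN
  simp only [lftNum, lftDen, Matrix.mul_apply, Fin.sum_univ_two] at *
  push_cast
  linear_combination -(M 0 0 : ℝ) * h

lemma lftDen_mul (M N : Mat) {x : ℝ} (hN : lftDen N x ≠ 0) :
    lftDen (M * N) x = lftDen N x * lftDen M (lft N x) := by
  have h := lftDen_mul_lft N hN
  simp only [lftNum, lftDen, Matrix.mul_apply, Fin.sum_univ_two] at *
  push_cast
  linear_combination -(M 1 0 : ℝ) * h

lemma lft_mul (M N : Mat) {x : ℝ} (hN : lftDen N x ≠ 0) :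
    lft (M * N) x = lft M (lft N x) := by
  rw [lft_eq_div, lft_eq_div M, lftNum_mul M N hN, lftDen_mul M N hN, mul_div_mul_left _ _ hN]

lemma lft_sub_lft (M : Mat) {x y : ℝ} (hx : lftDen M x ≠ 0) (hy : lftDen M y ≠ 0) :
    lft M x - lft M y = M.det * (x - y) / (lftDen M x * lftDen M y) := by
  rw [lft_eq_div, lft_eq_div, div_sub_div _ _ hx hy, Matrix.det_fin_two]
  simp only [lftNum, lftDen]
  push_cast
  ring

lemma strictMonoOn_lft {M : Mat} {s : Set ℝ} (hdet : 0 < M.det)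
    (hden : ∀ x ∈ s, 0 < lftDen M x) : StrictMonoOn (lft M) s := by
  intro x hx y hy hxy
  have hx' := hden x hx
  have hy' := hden y hy
  rw [← sub_pos, lft_sub_lft M hy'.ne' hx'.ne']
  have hdet' : (0 : ℝ) < M.det := by exact_mod_cast hdet
  have hxy' : 0 < y - x := sub_pos.2 hxy
  positivity

def intervalEmbeddings : Submonoid Mat where
  carrier := {M | (∀ x ∈ Ico (0 : ℝ) 1, 0 < lftDen M x) ∧
    MapsTo (lft M) (Ico 0 1) (Ico 0 1) ∧ InjOn (lft M) (Ico 0 1)}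
  one_mem' := by
    have hlft : lft 1 = id := funext fun x => by simp [lft]
    refine ⟨fun x _ => by simp [lftDen], ?_, ?_⟩ <;> rw [hlft]
    exacts [mapsTo_id _, injOn_id _]
  mul_mem' := by
    rintro M N ⟨hMden, hMmaps, hMinj⟩ ⟨hNden, hNmaps, hNinj⟩
    have hEq : EqOn (lft (M * N)) (lft M ∘ lft N) (Ico 0 1) :=
      fun x hx => lft_mul M N (hNden x hx).ne'
    refine ⟨fun x hx => ?_, (hMmaps.comp hNmaps).congr hEq.symm,
      (hMinj.comp hNinj hNmaps).congr hEq.symm⟩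
    rw [lftDen_mul M N (hNden x hx).ne']
    exact mul_pos (hNden x hx) (hMden _ (hNmaps hx))

lemma surjOn_of_surjOn_mul {M N : Mat} (hM : M ∈ intervalEmbeddings)
    (hN : N ∈ intervalEmbeddings) (h : SurjOn (lft (M * N)) (Ico 0 1) (Ico 0 1)) :
    SurjOn (lft M) (Ico 0 1) (Ico 0 1) ∧ SurjOn (lft N) (Ico 0 1) (Ico 0 1) := by
  have hEq : EqOn (lft (M * N)) (lft M ∘ lft N) (Ico 0 1) :=
    fun x hx => lft_mul M N (hN.1 x hx).ne'
  replace h := h.congr hEq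
  exact ⟨h.of_comp hN.2.1, h.of_comp_of_injOn hN.2.1 hM.2.1 hM.2.2⟩

lemma mem_intervalEmbeddings_of_det_pos {M : Mat} (hdet : 0 < M.det)
    (hden : ∀ x ∈ Icc (0 : ℝ) 1, 0 < lftDen M x) (h0 : 0 ≤ lft M 0) (h1 : lft M 1 ≤ 1) :
    M ∈ intervalEmbeddings := by
  have hmono := strictMonoOn_lft hdet hden
  exact ⟨fun x hx => hden x (Ico_subset_Icc_self hx),
    hmono.mapsTo_Ico.mono_right (Ico_subset_Ico h0 h1),
    hmono.injOn.mono Ico_subset_Icc_self⟩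

lemma not_surjOn_lft_of_det_pos {M : Mat} (hdet : 0 < M.det)
    (hden : ∀ x ∈ Icc (0 : ℝ) 1, 0 < lftDen M x) {y : ℝ} (hy : y ∈ Ico (0 : ℝ) 1)
    (hy' : y ∉ Ico (lft M 0) (lft M 1)) : ¬ SurjOn (lft M) (Ico 0 1) (Ico 0 1) := by
  intro h
  obtain ⟨x, hx, rfl⟩ := h hy
  exact hy' ((strictMonoOn_lft hdet hden).mapsTo_Ico hx)

lemma lftDen_MA_pos : ∀ x ∈ Icc (0 : ℝ) 1, 0 < lftDen MA x := fun x hx =>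
  by linarith [hx.1, show lftDen MA x = x + 1 by simp [lftDen, MA]]

lemma lftDen_MB_pos : ∀ x ∈ Icc (0 : ℝ) 1, 0 < lftDen MB x := fun x hx =>
  by linarith [hx.2, show lftDen MB x = 2 - x by simp [lftDen, MB, sub_eq_neg_add]]

lemma lftDen_MC_pos : ∀ x ∈ Icc (0 : ℝ) 1, 0 < lftDen MC x := fun x hx =>
  by linarith [hx.1, show lftDen MC x = x + 1 by simp [lftDen, MC]]

lemma lftDen_Mc_pos : ∀ x ∈ Icc (0 : ℝ) 1, 0 < lftDen Mc x := fun x hx =>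
  by linarith [hx.2, show lftDen Mc x = 2 - x by simp [lftDen, Mc, sub_eq_neg_add]]

lemma MA_mem_intervalEmbeddings : MA ∈ intervalEmbeddings :=
  mem_intervalEmbeddings_of_det_pos (by decide) lftDen_MA_pos (by norm_num [lft, MA])
    (by norm_num [lft, MA])

lemma MB_mem_intervalEmbeddings : MB ∈ intervalEmbeddings :=
  mem_intervalEmbeddings_of_det_pos (by decide) lftDen_MB_pos (by norm_num [lft, MB])
    (by norm_num [lft, MB])

lemma MC_mem_intervalEmbeddings : MC ∈ intervalEmbeddings :=
  mem_intervalEmbeddings_of_det_pos (by decide) lftDen_MC_pos (by norm_num [lft, MC])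
    (by norm_num [lft, MC])

lemma Mc_mem_intervalEmbeddings : Mc ∈ intervalEmbeddings :=
  mem_intervalEmbeddings_of_det_pos (by decide) lftDen_Mc_pos (by norm_num [lft, Mc])
    (by norm_num [lft, Mc])

lemma not_surjOn_lft_MA : ¬ SurjOn (lft MA) (Ico 0 1) (Ico 0 1) :=
  not_surjOn_lft_of_det_pos (y := 1 / 2) (by decide) lftDen_MA_pos (by norm_num)
    (by norm_num [lft, MA])

lemma not_surjOn_lft_MB : ¬ SurjOn (lft MB) (Ico 0 1) (Ico 0 1) :=
  not_surjOn_lft_of_det_pos (y := 0) (by decide) lftDen_MB_pos (by norm_num)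
    (by norm_num [lft, MB])

lemma mem_intervalEmbeddings_and_mem_closure_of_surjOn {M : Mat}
    (hM : M ∈ Submonoid.closure {MA, MB, MC, Mc}) :
    M ∈ intervalEmbeddings ∧
      (SurjOn (lft M) (Ico 0 1) (Ico 0 1) → M ∈ Submonoid.closure {MC, Mc}) := by
  induction hM using Submonoid.closure_induction with
  | mem M hM =>
    rcases hM with rfl | rfl | rfl | rfl
    · exact ⟨MA_mem_intervalEmbeddings, fun h => absurd h not_surjOn_lft_MA⟩
    · exact ⟨MB_mem_intervalEmbeddings, fun h => absurd h not_surjOn_lft_MB⟩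
    · exact ⟨MC_mem_intervalEmbeddings, fun _ => Submonoid.subset_closure (by simp)⟩
    · exact ⟨Mc_mem_intervalEmbeddings, fun _ => Submonoid.subset_closure (by simp)⟩
  | one => exact ⟨one_mem _, fun _ => one_mem _⟩
  | mul M N _ _ hM hN =>
    refine ⟨mul_mem hM.1 hN.1, fun h => ?_⟩
    obtain ⟨hMsurj, hNsurj⟩ := surjOn_of_surjOn_mul hM.1 hN.1 h
    exact mul_mem (hM.2 hMsurj) (hN.2 hNsurj)

lemma MC_mul_Mc : MC * Mc = (2 : ℤ) • 1 := by
  ext i j; fin_cases i <;> fin_cases j <;> rfl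

lemma Mc_mul_MC : Mc * MC = (2 : ℤ) • 1 := by
  ext i j; fin_cases i <;> fin_cases j <;> rfl

lemma commute_MC_Mc : Commute MC Mc := MC_mul_Mc.trans Mc_mul_MC.symm

lemma MC_pow_mul_Mc_pow_self (n : ℕ) : MC ^ n * Mc ^ n = (2 ^ n : ℤ) • 1 := by
  rw [← commute_MC_Mc.mul_pow, MC_mul_Mc, smul_pow, one_pow]

lemma MC_pow_mul_Mc_pow (a b : ℕ) : ∃ (k : ℕ) (u : ℤ), 0 < u ∧
    (MC ^ a * Mc ^ b = u • MC ^ k ∨ MC ^ a * Mc ^ b = u • Mc ^ k) := by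
  rcases le_total a b with h | h
  · obtain ⟨d, rfl⟩ := Nat.exists_eq_add_of_le h
    refine ⟨d, 2 ^ a, by positivity, Or.inr ?_⟩
    rw [pow_add, ← mul_assoc, MC_pow_mul_Mc_pow_self, smul_one_mul]
  · obtain ⟨d, rfl⟩ := Nat.exists_eq_add_of_le h
    refine ⟨d, 2 ^ b, by positivity, Or.inl ?_⟩
    rw [add_comm, pow_add, mul_assoc, MC_pow_mul_Mc_pow_self, mul_smul_one]

lemma exists_pow_mul_pow_of_mem_closure {M : Mat} (hM : M ∈ Submonoid.closure {MC, Mc}) :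
    ∃ a b : ℕ, MC ^ a * Mc ^ b = M := by
  induction hM using Submonoid.closure_induction with
  | mem M hM =>
    rcases hM with rfl | rfl
    exacts [⟨1, 0, by simp⟩, ⟨0, 1, by simp⟩]
  | one => exact ⟨0, 0, by simp⟩
  | mul M N _ _ hM hN =>
    obtain ⟨a, b, rfl⟩ := hM
    obtain ⟨a', b', rfl⟩ := hN
    refine ⟨a + a', b + b', ?_⟩
    simp only [pow_add, mul_assoc, (commute_MC_Mc.pow_pow a' b).left_comm]

end IntervalLFT

/-- Every element of the monoid generated by A, B, C, c whose associated linear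
    fractional transformation maps [0,1) bijectively onto [0,1) is, up to positive
    scalar, a power C^k (k ∈ ℤ, realized as C^k for k ≥ 0 or c^k for k ≤ 0). -/
theorem stmt7 :
    ∀ M ∈ Submonoid.closure ({MA, MB, MC, Mc} : Set (Matrix (Fin 2) (Fin 2) ℤ)),
      Set.BijOn (lft M) (Set.Ico 0 1) (Set.Ico 0 1) →
      ∃ k : ℕ, ∃ s t : ℤ, 0 < s ∧ 0 < t ∧ (s • M = t • MC ^ k ∨ s • M = t • Mc ^ k) := by
  intro M hM hbij
  obtain ⟨a, b, rfl⟩ := IntervalLFT.exists_pow_mul_pow_of_mem_closure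
    ((IntervalLFT.mem_intervalEmbeddings_and_mem_closure_of_surjOn hM).2 hbij.surjOn)
  obtain ⟨k, u, hu, h⟩ := IntervalLFT.MC_pow_mul_Mc_pow a b
  exact ⟨k, 1, u, one_pos, hu, by simpa only [one_smul] using h⟩
end

section
/- Let ω, ω' be words in the free monoid on {A, B}, where A(x) = x/(x+1) and B(x) = 1/(2-x) are transformations of [0,1). Then ω'·[0,1) ⊆ ω·[0,1) if and only if ω is a prefix of ω', and the two intervals are disjoint if and only if neither word is a prefix of the other. -/
/-- The generator letters: `false` is A(x) = x/(x+1), `true` is B(x) = 1/(2-x). -/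
noncomputable def gen (b : Bool) : ℝ → ℝ :=
  if b then (fun x => 1 / (2 - x)) else (fun x => x / (x + 1))

/-- A word ω = X₁X₂⋯Xₙ acts by composition X₁ ∘ X₂ ∘ ⋯ ∘ Xₙ; the empty word acts
    as the identity. -/
noncomputable def act (w : List Bool) : ℝ → ℝ :=
  w.foldr (fun b g => gen b ∘ g) id

open Set

lemma gen_false_mem {x : ℝ} (hx : x ∈ Ico (0:ℝ) 1) : gen false x ∈ Ico (0:ℝ) (1/2) := by
  obtain ⟨h0, h1⟩ := hx
  have hp : (0:ℝ) < x + 1 := by linarith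
  simp only [gen, Bool.false_eq_true, if_false]
  refine ⟨div_nonneg h0 hp.le, ?_⟩
  rw [div_lt_div_iff₀ hp (by norm_num)]
  linarith

lemma gen_true_mem {x : ℝ} (hx : x ∈ Ico (0:ℝ) 1) : gen true x ∈ Ico (1/2 : ℝ) 1 := by
  obtain ⟨h0, h1⟩ := hx
  have hp : (0:ℝ) < 2 - x := by linarith
  simp only [gen, if_true]
  constructor
  · rw [div_le_div_iff₀ (by norm_num) hp]; linarith
  · rw [div_lt_one hp]; linarith

lemma gen_mem {b : Bool} {x : ℝ} (hx : x ∈ Ico (0:ℝ) 1) : gen b x ∈ Ico (0:ℝ) 1 := by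
  cases b
  · have := gen_false_mem hx
    exact ⟨this.1, by linarith [this.2]⟩
  · have := gen_true_mem hx
    exact ⟨by linarith [this.1], this.2⟩

lemma gen_injOn (b : Bool) : InjOn (gen b) (Ico (0:ℝ) 1) := by
  intro x hx y hy h
  cases b
  · simp only [gen, Bool.false_eq_true, if_false] at h
    have hx1 : x + 1 ≠ 0 := by have := hx.1; intro h'; linarith
    have hy1 : y + 1 ≠ 0 := by have := hy.1; intro h'; linarith
    field_simp at h
    linarith
  · simp only [gen, if_true] at h
    have hx1 : 2 - x ≠ 0 := by have := hx.2; intro h'; linarith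
    have hy1 : 2 - y ≠ 0 := by have := hy.2; intro h'; linarith
    field_simp at h
    linarith

lemma act_cons (b : Bool) (w : List Bool) (s : Set ℝ) :
    act (b :: w) '' s = gen b '' (act w '' s) := by
  show (gen b ∘ act w) '' s = _
  rw [Set.image_comp]

lemma act_image_subset (w : List Bool) : act w '' Ico (0:ℝ) 1 ⊆ Ico (0:ℝ) 1 := by
  induction w with
  | nil => simp [act]
  | cons b w ih =>
    rw [act_cons]
    rintro y ⟨x, hx, rfl⟩
    exact gen_mem (ih hx)

lemma act_nonempty (w : List Bool) : (act w '' Ico (0:ℝ) 1).Nonempty :=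
  (Set.nonempty_Ico.2 (by norm_num)).image _

lemma act_false_half (w : List Bool) :
    act (false :: w) '' Ico (0:ℝ) 1 ⊆ Ico (0:ℝ) (1/2) := by
  rw [act_cons]
  rintro y ⟨x, hx, rfl⟩
  exact gen_false_mem (act_image_subset w hx)

lemma act_true_half (w : List Bool) :
    act (true :: w) '' Ico (0:ℝ) 1 ⊆ Ico (1/2:ℝ) 1 := by
  rw [act_cons]
  rintro y ⟨x, hx, rfl⟩
  exact gen_true_mem (act_image_subset w hx)

lemma injOn_disjoint {f : ℝ → ℝ} {s s₁ s₂ : Set ℝ} (h : InjOn f s) (h1 : s₁ ⊆ s)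
    (h2 : s₂ ⊆ s) : Disjoint (f '' s₁) (f '' s₂) ↔ Disjoint s₁ s₂ := by
  constructor
  · intro hd
    rw [Set.disjoint_left] at hd ⊢
    intro x hx1 hx2
    exact hd (mem_image_of_mem f hx1) (mem_image_of_mem f hx2)
  · intro hd
    rw [Set.disjoint_left] at hd ⊢
    rintro y ⟨x, hx1, rfl⟩ ⟨x', hx2, he⟩
    have : x' = x := h (h2 hx2) (h1 hx1) he
    exact hd hx1 (this ▸ hx2)

lemma halves_disjoint : Disjoint (Ico (0:ℝ) (1/2)) (Ico (1/2:ℝ) 1) := by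
  rw [Set.disjoint_left]
  rintro x ⟨_, h1⟩ ⟨h2, _⟩
  linarith

/-- ω'·[0,1) ⊆ ω·[0,1) iff ω is a prefix of ω', and the two intervals are disjoint iff
    neither word is a prefix of the other. -/
theorem stmt8 (w w' : List Bool) :
    (act w' '' Set.Ico (0 : ℝ) 1 ⊆ act w '' Set.Ico (0 : ℝ) 1 ↔ w <+: w') ∧
    (Disjoint (act w '' Set.Ico (0 : ℝ) 1) (act w' '' Set.Ico (0 : ℝ) 1) ↔
      ¬ w <+: w' ∧ ¬ w' <+: w) := by
  induction w generalizing w' with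
  | nil =>
    constructor
    · simp only [List.nil_prefix, iff_true]
      have : act ([] : List Bool) '' Ico (0:ℝ) 1 = Ico (0:ℝ) 1 := by simp [act]
      rw [this]; exact act_image_subset w'
    · simp only [List.nil_prefix, not_true, false_and, iff_false]
      intro hd
      obtain ⟨y, hy⟩ := act_nonempty w'
      exact Set.disjoint_left.1 hd (by simpa [act] using act_image_subset w' hy) hy
  | cons a w ih =>
    cases w' with
    | nil =>
      have hne := act_nonempty (a :: w)
      have hid : act ([] : List Bool) '' Ico (0:ℝ) 1 = Ico (0:ℝ) 1 := by simp [act]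
      constructor
      · simp only [iff_false, List.prefix_nil]
        constructor
        · intro hsub
          rw [hid] at hsub
          cases a
          · have := act_false_half w (hsub (⟨by norm_num, by norm_num⟩ : (1/2:ℝ) ∈ Ico (0:ℝ) 1))
            exact absurd this.2 (by norm_num)
          · have := act_true_half w (hsub (⟨le_refl 0, by norm_num⟩ : (0:ℝ) ∈ Ico (0:ℝ) 1))
            exact absurd this.1 (by norm_num)
        · intro h; simp at h
      · rw [hid]
        simp only [List.prefix_nil, List.nil_prefix, not_true, and_false, iff_false]
        intro hd
        obtain ⟨y, hy⟩ := hne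
        exact Set.disjoint_left.1 hd hy (act_image_subset (a :: w) hy)
    | cons a' w' =>
      by_cases hab : a = a'
      · subst hab
        obtain ⟨ihs, ihd⟩ := ih w'
        have hsub : act (a :: w') '' Ico (0:ℝ) 1 ⊆ act (a :: w) '' Ico (0:ℝ) 1 ↔
            act w' '' Ico (0:ℝ) 1 ⊆ act w '' Ico (0:ℝ) 1 := by
          rw [act_cons, act_cons]
          exact (gen_injOn a).image_subset_image_iff (act_image_subset w') (act_image_subset w)
        have hdis : Disjoint (act (a :: w) '' Ico (0:ℝ) 1) (act (a :: w') '' Ico (0:ℝ) 1) ↔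
            Disjoint (act w '' Ico (0:ℝ) 1) (act w' '' Ico (0:ℝ) 1) := by
          rw [act_cons, act_cons]
          exact injOn_disjoint (gen_injOn a) (act_image_subset w) (act_image_subset w')
        refine ⟨?_, ?_⟩
        · rw [hsub, ihs, List.cons_prefix_cons]
          simp
        · rw [hdis, ihd, List.cons_prefix_cons, List.cons_prefix_cons]
          simp
      · have hdisj : Disjoint (act (a :: w) '' Ico (0:ℝ) 1) (act (a' :: w') '' Ico (0:ℝ) 1) := by
          cases a <;> cases a'
          · exact absurd rfl hab
          · exact Set.disjoint_of_subset (act_false_half w) (act_true_half w') halves_disjoint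
          · exact Set.disjoint_of_subset (act_true_half w) (act_false_half w') halves_disjoint.symm
          · exact absurd rfl hab
        refine ⟨?_, ?_⟩
        · simp only [List.cons_prefix_cons, hab, false_and, iff_false]
          intro hsub
          obtain ⟨y, hy⟩ := act_nonempty (a' :: w')
          exact Set.disjoint_left.1 hdisj (hsub hy) hy
        · simp only [List.cons_prefix_cons, hab, Ne.symm hab, false_and, not_false_iff,
            and_self, iff_true]
          exact hdisj
end

section
/- Let M₂ be the abstract monoid presented by generators A, B, C, c with relations CAA = AC, CB = BBC, CAB = BAc, cA = AAc, cBB = Bc, cBA = ABC, Cc = 1, cC = 1. Then the string rewriting system obtained by orienting each relation left-to-right is terminating: there is no infinite sequence of rewrites. -/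
/-- The alphabet {A, B, C, c}. -/
inductive Letter | A | B | C | c
  deriving DecidableEq

open Letter

/-- The rewriting rules of the presentation of the Lodha–Moore monoid M₂, oriented
    left-to-right: CAA → AC, CB → BBC, CAB → BAc, cA → AAc, cBB → Bc, cBA → ABC,
    Cc → 1, cC → 1. -/
def rules : List (List Letter × List Letter) :=
  [([C, A, A], [A, C]), ([C, B], [B, B, C]), ([C, A, B], [B, A, c]),
   ([c, A], [A, A, c]), ([c, B, B], [B, c]), ([c, B, A], [A, B, C]),
   ([C, c], []), ([c, C], [])]

/-- One rewriting step: replace an occurrence of a left-hand side with the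
    corresponding right-hand side. -/
def Step (w w' : List Letter) : Prop :=
  ∃ p ∈ rules, ∃ u v : List Letter, w = u ++ p.1 ++ v ∧ w' = u ++ p.2 ++ v

/-!
Interpret `A` and `B` as `x ↦ x + 1` and `C`, `c` as `x ↦ 4 ^ x` on `ℕ`, and a word as the
composite of its letters applied to `0`. All these maps are strictly monotone, and for every
rule the left-hand side exceeds the right-hand side at every argument; so the weight of a word
strictly decreases under each rewrite, and `ℕ` admits no infinite descent.
-/

namespace Letter

def interp : Letter → ℕ → ℕ
  | A, x => x + 1
  | B, x => x + 1
  | C, x => 4 ^ x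
  | c, x => 4 ^ x

theorem interp_strictMono (l : Letter) : StrictMono l.interp := by
  cases l
  all_goals intro x y hxy; simp only [interp]
  · omega
  · omega
  · exact Nat.pow_lt_pow_right (by norm_num) hxy
  · exact Nat.pow_lt_pow_right (by norm_num) hxy

end Letter

def weight (w : List Letter) : ℕ := w.foldr Letter.interp 0

theorem rhs_lt_lhs_of_mem_rules {p : List Letter × List Letter} (hp : p ∈ rules) (x : ℕ) :
    p.2.foldr Letter.interp x < p.1.foldr Letter.interp x := by
  have hself : x < 4 ^ x := Nat.lt_pow_self (by norm_num)
  have hiter : 4 ^ x < 4 ^ 4 ^ x := Nat.lt_pow_self (by norm_num)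
  have hsucc : 4 ^ x + 2 < 4 ^ (x + 1) := by
    have : 1 ≤ 4 ^ x := Nat.one_le_pow _ _ (by norm_num)
    rw [pow_succ]
    omega
  have hsucc' : 4 ^ (x + 1) < 4 ^ (x + 2) := Nat.pow_lt_pow_right (by norm_num) (by omega)
  simp only [rules, List.mem_cons, List.not_mem_nil, or_false] at hp
  rcases hp with rfl | rfl | rfl | rfl | rfl | rfl | rfl | rfl <;>
    simp only [List.foldr_cons, List.foldr_nil, Letter.interp] <;> omega

theorem Step.weight_lt {w w' : List Letter} (h : Step w w') : weight w' < weight w := by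
  obtain ⟨p, hp, u, v, rfl, rfl⟩ := h
  simp only [weight, List.append_assoc, List.foldr_append]
  exact List.foldr_strictMono Letter.interp_strictMono u (rhs_lt_lhs_of_mem_rules hp _)

/-- The string rewriting system is terminating: there is no infinite sequence of
    rewrites. -/
theorem stmt14 : ¬ ∃ f : ℕ → List Letter, ∀ n : ℕ, Step (f n) (f (n + 1)) := by
  rintro ⟨f, hf⟩
  exact not_strictAnti_of_wellFoundedLT (weight ∘ f)
    (strictAnti_nat_of_succ_lt fun n => (hf n).weight_lt)
end

section
/- Let F be a linear fractional transformation represented by an integer matrix of determinant a power of 2 that maps [0,1) bijectively to [0,1). If additionally F is represented by a product of the matrices A = [[1,0],[1,1]], B = [[0,1],[-1,2]], C₂ = [[2,0],[1,1]] and their inverses, and F is not the identity, then F has no fixed points in the open interval (0,1). -/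
/- The inverses of A, B, C₂ (the last up to positive scalar). -/
def Ma : Matrix (Fin 2) (Fin 2) ℤ := !![1, 0; -1, 1]
def Mb : Matrix (Fin 2) (Fin 2) ℤ := !![2, -1; 1, 0]
open Set Filter Topology

noncomputable def mobius (a b c d x : ℝ) : ℝ := (a * x + b) / (c * x + d)

lemma lft_eq_mobius (N : Matrix (Fin 2) (Fin 2) ℤ) :
    lft N = mobius (N 0 0) (N 0 1) (N 1 0) (N 1 1) :=
  rfl

section Mobius

variable {a b c d : ℝ}

lemma affine_cross_mul_sub (x y : ℝ) :
    (a * x + b) * (c * y + d) - (a * y + b) * (c * x + d) = (a * d - b * c) * (x - y) := by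
  ring

lemma mobius_mul_den {x : ℝ} (hx : c * x + d ≠ 0) :
    mobius a b c d x * (c * x + d) = a * x + b :=
  div_mul_cancel₀ _ hx

lemma num_eq_mul_den_of_tendsto {l : Filter ℝ} [l.NeBot] {p L : ℝ} (hl : l ≤ 𝓝 p)
    (hden : ∀ᶠ x in l, c * x + d ≠ 0) (h : Tendsto (mobius a b c d) l (𝓝 L)) :
    a * p + b = L * (c * p + d) := by
  have haffine (u v : ℝ) : Tendsto (fun x ↦ u * x + v) l (𝓝 (u * p + v)) :=
    ((by fun_prop : Continuous fun x : ℝ ↦ u * x + v).tendsto p).mono_left hl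
  refine tendsto_nhds_unique ((haffine a b).congr' ?_) (h.mul (haffine c d))
  filter_upwards [hden] with x hx using (mobius_mul_den hx).symm

/-- Letting `x` decrease to a pole `p` in `|a x + b| ≤ |c x + d|` gives `a p + b = 0` too,
and then `(a, b)` and `(c, d)` are proportional. -/
lemma den_ne_zero_of_mapsTo (hdet : a * d - b * c ≠ 0)
    (hmaps : MapsTo (mobius a b c d) (Ico 0 1) (Ico 0 1)) :
    ∀ x ∈ Ico (0 : ℝ) 1, c * x + d ≠ 0 := by
  intro p hp hpole
  have hden : ∀ x ≠ p, c * x + d ≠ 0 := fun x hx h0 ↦ by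
    have := affine_cross_mul_sub (a := a) (b := b) (c := c) (d := d) x p
    rw [hpole, h0] at this
    exact mul_ne_zero hdet (sub_ne_zero.mpr hx) (by simpa using this.symm)
  have hbound : ∀ x ∈ Ioo p 1, |a * x + b| ≤ |c * x + d| := fun x hx ↦ by
    have hx0 := hden x hx.1.ne'
    have hF := hmaps ⟨hp.1.trans hx.1.le, hx.2⟩
    rw [← mobius_mul_den hx0, abs_mul, abs_of_nonneg hF.1]
    exact mul_le_of_le_one_left (abs_nonneg _) hF.2.le
  have habs_affine (u v : ℝ) : Tendsto (fun x ↦ |u * x + v|) (𝓝[>] p) (𝓝 |u * p + v|) :=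
    ((by fun_prop : Continuous fun x : ℝ ↦ |u * x + v|).tendsto p).mono_left nhdsWithin_le_nhds
  have hnum : |a * p + b| ≤ |c * p + d| :=
    le_of_tendsto_of_tendsto (habs_affine a b) (habs_affine c d)
      (eventually_of_mem (Ioo_mem_nhdsGT hp.2) hbound)
  rw [hpole, abs_zero, abs_nonpos_iff] at hnum
  have := affine_cross_mul_sub (a := a) (b := b) (c := c) (d := d) (p + 1) p
  rw [hnum, hpole] at this
  exact hdet (by simpa using this.symm)

lemma den_mul_den_pos {s : Set ℝ} (hs : s.OrdConnected) (hden : ∀ x ∈ s, c * x + d ≠ 0)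
    {x y : ℝ} (hx : x ∈ s) (hy : y ∈ s) : 0 < (c * x + d) * (c * y + d) := by
  by_contra! hneg
  have hzero : (0 : ℝ) ∈ uIcc (c * x + d) (c * y + d) := by
    rw [mem_uIcc]
    rcases mul_nonpos_iff.mp hneg with h | h
    · exact Or.inr h.symm
    · exact Or.inl h
  obtain ⟨z, hz, hz0⟩ := intermediate_value_uIcc (f := fun t ↦ c * t + d) (by fun_prop) hzero
  exact hden z (hs.uIcc_subset hx hy hz) hz0

lemma mobius_strictMonoOn (hdet : 0 < a * d - b * c) {s : Set ℝ} (hs : s.OrdConnected)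
    (hden : ∀ x ∈ s, c * x + d ≠ 0) : StrictMonoOn (mobius a b c d) s := by
  intro x hx y hy hxy
  have hdiff : mobius a b c d y - mobius a b c d x
      = (a * d - b * c) * (y - x) / ((c * y + d) * (c * x + d)) := by
    rw [mobius, mobius, div_sub_div _ _ (hden y hy) (hden x hx)]
    ring
  have : 0 < mobius a b c d y - mobius a b c d x := by
    rw [hdiff]
    exact div_pos (mul_pos hdet (sub_pos.mpr hxy)) (den_mul_den_pos hs hden hy hx)
  linarith

end Mobius

section SelfMapIco

variable {α : Type*} [LinearOrder α] {g : α → α} {a b : α}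

lemma MonotoneOn.apply_left_eq_of_surjOn_Ico (hg : MonotoneOn g (Ico a b))
    (hmaps : MapsTo g (Ico a b) (Ico a b)) (hsurj : SurjOn g (Ico a b) (Ico a b)) (hab : a < b) :
    g a = a := by
  have ha : a ∈ Ico a b := left_mem_Ico.mpr hab
  obtain ⟨x, hx, hgx⟩ := hsurj ha
  exact le_antisymm (hgx ▸ hg ha hx hx.1) (hmaps ha).1

lemma StrictMonoOn.tendsto_nhdsLT_of_surjOn_Ico [TopologicalSpace α] [OrderTopology α]
    (hg : StrictMonoOn g (Ico a b)) (hmaps : MapsTo g (Ico a b) (Ico a b))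
    (hsurj : SurjOn g (Ico a b) (Ico a b)) (hab : a < b) : Tendsto g (𝓝[<] b) (𝓝 b) := by
  refine tendsto_order.mpr ⟨fun a' ha' ↦ ?_, fun a' ha' ↦ ?_⟩
  · obtain ⟨x, hx, hgx⟩ := hsurj (⟨le_max_right a' a, max_lt ha' hab⟩ : max a' a ∈ Ico a b)
    filter_upwards [Ioo_mem_nhdsLT hx.2] with y hy
    calc a' ≤ max a' a := le_max_left a' a
      _ = g x := hgx.symm
      _ < g y := hg hx ⟨hx.1.trans hy.1.le, hy.2⟩ hy.1
  · filter_upwards [Ico_mem_nhdsLT hab] with y hy using (hmaps hy).2.trans ha'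

end SelfMapIco

lemma mobius_eqOn_id_of_bijOn_of_apply_eq {a b c d x₀ : ℝ} (hdet : 0 < a * d - b * c)
    (hbij : BijOn (mobius a b c d) (Ico 0 1) (Ico 0 1)) (hx₀ : x₀ ∈ Ioo (0 : ℝ) 1)
    (hfix : mobius a b c d x₀ = x₀) : EqOn (mobius a b c d) id (Ico 0 1) := by
  have hden := den_ne_zero_of_mapsTo hdet.ne' hbij.mapsTo
  have hmono := mobius_strictMonoOn hdet ordConnected_Ico hden
  have h0 : mobius a b c d 0 = 0 :=
    hmono.monotoneOn.apply_left_eq_of_surjOn_Ico hbij.mapsTo hbij.surjOn one_pos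
  have h1 : a * 1 + b = 1 * (c * 1 + d) :=
    num_eq_mul_den_of_tendsto nhdsWithin_le_nhds
      (eventually_of_mem (Ico_mem_nhdsLT one_pos) hden)
      (hmono.tendsto_nhdsLT_of_surjOn_Ico hbij.mapsTo hbij.surjOn one_pos)
  have hd : d ≠ 0 := by simpa using hden 0 ⟨le_rfl, one_pos⟩
  have hb : b = 0 := by simpa [mobius, hd] using h0
  have hfix' : a * x₀ + b = x₀ * (c * x₀ + d) := by
    rw [← mobius_mul_den (hden x₀ ⟨hx₀.1.le, hx₀.2⟩), hfix]
  -- with `b = 0`, both `a = c + d` and `a = c * x₀ + d`, so `c * (1 - x₀) = 0`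
  have hc : c = 0 := by
    have : c * (1 - x₀) * x₀ = 0 := by linear_combination hfix' - x₀ * h1 + (x₀ - 1) * hb
    simpa [sub_eq_zero, hx₀.1.ne', hx₀.2.ne'] using this
  obtain rfl : b = 0 := hb
  obtain rfl : c = 0 := hc
  have had : a = d := by linarith
  intro x hx
  rw [mobius, id, div_eq_iff (hden x hx), had]
  ring

theorem stmt16_general (F : ℝ → ℝ)
    (hmat : ∃ N : Matrix (Fin 2) (Fin 2) ℤ, ∃ n : ℕ,
      N.det = 2 ^ n ∧ ∀ x ∈ Set.Ico (0 : ℝ) 1, F x = lft N x)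
    (hbij : Set.BijOn F (Set.Ico 0 1) (Set.Ico 0 1))
    (hne : ¬ ∀ x ∈ Set.Ico (0 : ℝ) 1, F x = x) :
    ∀ x ∈ Set.Ioo (0 : ℝ) 1, F x ≠ x := by
  obtain ⟨N, n, hdet, hF⟩ := hmat
  have hdetR : 0 < (N 0 0 : ℝ) * N 1 1 - N 0 1 * N 1 0 := by
    have : (0 : ℝ) < N.det := by rw [hdet]; positivity
    simpa [Matrix.det_fin_two] using this
  intro x₀ hx₀ hfix
  have hlft : EqOn F (lft N) (Ico 0 1) := hF
  rw [lft_eq_mobius] at hlft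
  refine hne fun x hx ↦ ?_
  rw [hlft hx]
  exact mobius_eqOn_id_of_bijOn_of_apply_eq hdetR (hbij.congr hlft) hx₀
    ((hlft ⟨hx₀.1.le, hx₀.2⟩).symm.trans hfix) hx

/-- If F is a linear fractional transformation represented by an integer matrix of
    determinant a power of 2 mapping [0,1) bijectively to [0,1), represented by a
    product of the matrices A, B, C₂ and their inverses, and F is not the identity on
    [0,1), then F has no fixed points in (0,1). -/
theorem stmt16 (F : ℝ → ℝ)
    (hmat : ∃ N : Matrix (Fin 2) (Fin 2) ℤ, ∃ n : ℕ,
      N.det = 2 ^ n ∧ ∀ x ∈ Set.Ico (0 : ℝ) 1, F x = lft N x)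
    (hgen : ∃ M ∈ Submonoid.closure
        ({MA, MB, MC, Ma, Mb, Mc} : Set (Matrix (Fin 2) (Fin 2) ℤ)),
      ∀ x ∈ Set.Ico (0 : ℝ) 1, F x = lft M x)
    (hbij : Set.BijOn F (Set.Ico 0 1) (Set.Ico 0 1))
    (hne : ¬ ∀ x ∈ Set.Ico (0 : ℝ) 1, F x = x) :
    ∀ x ∈ Set.Ioo (0 : ℝ) 1, F x ≠ x :=
  stmt16_general F hmat hbij hne
end
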